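/- arXiv:2409.12611 — 5 statements merged into one kernel-verified Lean document; each statement's English description precedes it below -/
import Mathlib

section
/- Let ξ be a standard normal random variable, ℓ := max{0, ξ}, and let p := Φ(ℓ). Then for every q ∈ (0, 1/2), P(1 - p ≤ q) = q; that is, the test rejecting when 1 - Φ(ℓ) ≤ q is exactly sized at level q for all nominal levels q below 1/2. -/
open MeasureTheory ProbabilityTheory

/-- The standard normal cdf Φ. -/
noncomputable def stdNormalCDF : ℝ → ℝ := fun x => ProbabilityTheory.cdf (gaussianReal 0 1) x

open Set
open scoped ENNReal

instance : MeasureTheory.NullSingletonClass (gaussianReal 0 1) := by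
  constructor
  intro x
  exact ProbabilityTheory.gaussianReal_absolutelyContinuous 0 one_ne_zero
    (measure_singleton x)

lemma stdNormalCDF_continuous : Continuous stdNormalCDF := by
  set μ := gaussianReal 0 1
  set f := ProbabilityTheory.cdf μ with hf
  rw [continuous_iff_continuousAt]
  intro x
  have h1 : f.measure {x} = ENNReal.ofReal (f x - Function.leftLim f x) :=
    f.measure_singleton x
  rw [ProbabilityTheory.measure_cdf] at h1
  have h2 : (μ : Measure ℝ) {x} = 0 := measure_singleton x
  rw [h2] at h1
  have h3 : Function.leftLim f x = f x := by
    have hle : Function.leftLim f x ≤ f x := f.mono.leftLim_le le_rfl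
    have : f x - Function.leftLim f x ≤ 0 := by
      by_contra h
      push_neg at h
      have := ENNReal.ofReal_pos.2 h
      rw [← h1] at this
      exact lt_irrefl _ this
    linarith
  have := (f.mono.continuousAt_iff_leftLim_eq_rightLim (x := x)).2
    (by rw [h3, f.rightLim_eq])
  exact this

lemma gaussian_Ioc_pos {a b : ℝ} (hab : a < b) : 0 < gaussianReal 0 1 (Ioc a b) := by
  by_contra h
  push_neg at h
  have h0 : gaussianReal 0 1 (Ioc a b) = 0 := le_antisymm h zero_le
  have := ProbabilityTheory.gaussianReal_absolutelyContinuous' 0 one_ne_zero h0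
  rw [Real.volume_Ioc] at this
  simp [ENNReal.ofReal_eq_zero] at this
  linarith

lemma stdNormalCDF_strictMono : StrictMono stdNormalCDF := by
  intro a b hab
  have key : gaussianReal 0 1 (Iic b) = gaussianReal 0 1 (Iic a) + gaussianReal 0 1 (Ioc a b) := by
    rw [← Set.Iic_union_Ioc_eq_Iic hab.le]
    exact measure_union (Set.Iic_disjoint_Ioc le_rfl) measurableSet_Ioc
  have h1 : stdNormalCDF a = (gaussianReal 0 1 (Iic a)).toReal :=
    ProbabilityTheory.cdf_eq_real _ _
  have h2 : stdNormalCDF b = (gaussianReal 0 1 (Iic b)).toReal :=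
    ProbabilityTheory.cdf_eq_real _ _
  rw [h1, h2, key, ENNReal.toReal_add (measure_ne_top _ _) (measure_ne_top _ _)]
  have := ENNReal.toReal_pos (gaussian_Ioc_pos hab).ne' (measure_ne_top _ _)
  linarith

lemma stdNormalCDF_zero : stdNormalCDF 0 = 1/2 := by
  have hmap : (gaussianReal 0 1).map (fun x => (-1 : ℝ) * x) = gaussianReal 0 1 := by
    rw [ProbabilityTheory.gaussianReal_map_const_mul (-1)]
    norm_num
  have hIic : gaussianReal 0 1 (Iic 0) = gaussianReal 0 1 (Ici 0) := by
    conv_lhs => rw [← hmap]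
    rw [Measure.map_apply (by fun_prop) measurableSet_Iic]
    congr 1
    ext x
    simp [mul_nonpos_iff]
  have hIoi : gaussianReal 0 1 (Ici 0) = gaussianReal 0 1 (Ioi 0) :=
    (measure_congr (Ioi_ae_eq_Ici (a := (0:ℝ)))).symm
  have hsum : gaussianReal 0 1 (Iic 0) + gaussianReal 0 1 (Ioi 0) = 1 := by
    rw [← measure_union (Set.Iic_disjoint_Ioi le_rfl) measurableSet_Ioi, Set.Iic_union_Ioi,
      measure_univ]
  rw [hIic, hIoi] at hsum
  have h2 : gaussianReal 0 1 (Iic 0) = 1/2 := by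
    rw [hIic, hIoi]
    have : (2 : ℝ≥0∞) * gaussianReal 0 1 (Ioi 0) = 1 := by rw [two_mul, hsum]
    rw [ENNReal.eq_div_iff (by norm_num) (by norm_num), this]
  have : stdNormalCDF 0 = ((gaussianReal 0 1) (Iic 0)).toReal :=
    ProbabilityTheory.cdf_eq_real _ _
  rw [this, h2]
  simp [ENNReal.toReal_div]

/-- For ξ standard normal, ℓ = max{0, ξ} and p = Φ(ℓ), one has P(1 - p ≤ q) = q for every
nominal level q ∈ (0, 1/2). -/
theorem stmt_2
    {Ω : Type*} [MeasurableSpace Ω] (P : Measure Ω) [IsProbabilityMeasure P]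
    (ξ : Ω → ℝ) (hξmeas : Measurable ξ)
    (hξ : Measure.map ξ P = gaussianReal 0 1)
    (ℓ : Ω → ℝ) (hℓ : ∀ ω, ℓ ω = max 0 (ξ ω))
    (q : ℝ) (hq : q ∈ Set.Ioo (0:ℝ) (1/2)) :
    P {ω | 1 - stdNormalCDF (ℓ ω) ≤ q} = ENNReal.ofReal q := by
  obtain ⟨hq0, hq2⟩ := hq
  -- find c with Φ c = 1 - q
  obtain ⟨a, ha⟩ := ((ProbabilityTheory.tendsto_cdf_atBot (gaussianReal 0 1)).eventually
    (eventually_le_nhds (by linarith : (0:ℝ) < 1 - q))).exists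
  obtain ⟨b, hb⟩ := ((ProbabilityTheory.tendsto_cdf_atTop (gaussianReal 0 1)).eventually
    (eventually_ge_nhds (by linarith : 1 - q < 1))).exists
  obtain ⟨c, hc⟩ := intermediate_value_univ a b stdNormalCDF_continuous
    (⟨ha, hb⟩ : 1 - q ∈ Icc (stdNormalCDF a) (stdNormalCDF b))
  have hc0 : 0 < c := by
    have := stdNormalCDF_strictMono.lt_iff_lt (a := 0) (b := c)
    rw [← this, stdNormalCDF_zero, hc]
    linarith
  -- set equality
  have hset : {ω | 1 - stdNormalCDF (ℓ ω) ≤ q} = ξ ⁻¹' (Ici c) := by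
    ext ω
    simp only [mem_setOf_eq, mem_preimage, mem_Ici, hℓ ω]
    rw [sub_le_iff_le_add, ← sub_le_iff_le_add', ← hc,
      stdNormalCDF_strictMono.le_iff_le, le_max_iff]
    constructor
    · rintro (h | h)
      · linarith
      · exact h
    · exact fun h => Or.inr h
  rw [hset, ← Measure.map_apply hξmeas measurableSet_Ici, hξ]
  have h1 : gaussianReal 0 1 (Ici c) = gaussianReal 0 1 (Ioi c) :=
    (measure_congr (Ioi_ae_eq_Ici (a := c))).symm
  have h2 : gaussianReal 0 1 (Ioi c) = 1 - gaussianReal 0 1 (Iic c) := by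
    rw [← Set.compl_Iic, measure_compl measurableSet_Iic (measure_ne_top _ _), measure_univ]
  have h3 : gaussianReal 0 1 (Iic c) = ENNReal.ofReal (1 - q) := by
    rw [← ProbabilityTheory.ofReal_cdf, ← hc]; rfl
  rw [h1, h2, h3, ← ENNReal.ofReal_one, ← ENNReal.ofReal_sub 1 (by linarith)]
  norm_num
end

section
/- Let M be a symmetric positive definite 2×2 matrix, g ∈ ℝ² nonzero, and g⊥ ∈ ℝ² a nonzero vector orthogonal to g (i.e., gᵀg⊥ = 0). Then the projection identity I₂ - M^{-1} g (gᵀ M^{-1} g)^{-1} gᵀ = g⊥ (g⊥ᵀ M g⊥)^{-1} g⊥ᵀ M holds. -/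
open Matrix

/-- Projection identity: for M symmetric positive definite and g ⊥ g⊥ nonzero,
I₂ - M⁻¹ g (gᵀM⁻¹g)⁻¹ gᵀ = g⊥ (g⊥ᵀ M g⊥)⁻¹ g⊥ᵀ M. -/
theorem stmt_5 (M : Matrix (Fin 2) (Fin 2) ℝ) (hM : M.PosDef) (hMsym : M.IsSymm)
    (g gp : Fin 2 → ℝ) (hg : g ≠ 0) (hgp : gp ≠ 0) (hperp : g ⬝ᵥ gp = 0) :
    (1 : Matrix (Fin 2) (Fin 2) ℝ)
        - (g ⬝ᵥ M⁻¹.mulVec g)⁻¹ • (M⁻¹ * Matrix.vecMulVec g g)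
      = (gp ⬝ᵥ M.mulVec gp)⁻¹ • (Matrix.vecMulVec gp gp * M) := by
  have hdet : M.det ≠ 0 := ne_of_gt hM.det_pos
  have hdet2 : M 0 0 * M 1 1 - M 1 0 * M 1 0 ≠ 0 := by
    have := hdet
    rw [Matrix.det_fin_two] at this
    have hb : M 0 1 = M 1 0 := by simpa using (hMsym.apply 0 1).symm
    rwa [hb] at this
  have hb : M 0 1 = M 1 0 := by simpa using (hMsym.apply 0 1).symm
  obtain ⟨c, hc0, hc1⟩ : ∃ c : ℝ, gp 0 = c * g 1 ∧ gp 1 = -(c * g 0) := by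
    have hp : g 0 * gp 0 + g 1 * gp 1 = 0 := by
      simpa [dotProduct, Fin.sum_univ_two] using hperp
    by_cases h0 : g 0 = 0
    · have h1 : g 1 ≠ 0 := by
        intro h1
        apply hg; funext i; fin_cases i <;> simp [h0, h1]
      refine ⟨gp 0 / g 1, by field_simp, ?_⟩
      have h2 : g 1 * gp 1 = 0 := by rw [h0] at hp; linarith
      have h3 : gp 1 = 0 := by
        rcases mul_eq_zero.mp h2 with h | h
        · exact absurd h h1
        · exact h
      simp [h3, h0]
    · refine ⟨-(gp 1 / g 0), ?_, by field_simp⟩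
      field_simp
      nlinarith [hp]
  have hc : c ≠ 0 := by
    intro h
    apply hgp; funext i; fin_cases i <;> simp [hc0, hc1, h]
  set Q : ℝ := M 1 1 * g 0 ^ 2 - 2 * M 1 0 * (g 0 * g 1) + M 0 0 * g 1 ^ 2 with hQdef
  have eq2 : gp ⬝ᵥ M.mulVec gp = c ^ 2 * Q := by
    simp only [dotProduct, Matrix.mulVec, Fin.sum_univ_two, hc0, hc1, hb, hQdef]
    ring
  have hQ : Q ≠ 0 := by
    intro h
    have := hM.dotProduct_mulVec_pos hgp
    simp only [star_trivial] at this
    rw [eq2, h, mul_zero] at this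
    exact lt_irrefl 0 this
  have eq1 : g ⬝ᵥ M⁻¹.mulVec g = (M 0 0 * M 1 1 - M 1 0 * M 1 0)⁻¹ * Q := by
    simp only [dotProduct, Matrix.mulVec, Fin.sum_univ_two, Matrix.inv_def,
      Matrix.adjugate_fin_two, Matrix.det_fin_two, Ring.inverse_eq_inv',
      Matrix.smul_apply, Matrix.of_apply, Matrix.cons_val', Matrix.cons_val_zero,
      Matrix.cons_val_one, Matrix.head_cons, Matrix.head_fin_const, smul_eq_mul,
      Matrix.empty_val', Matrix.cons_val_fin_one, hb, hQdef]
    ring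
  rw [eq1, eq2, mul_inv, inv_inv, mul_inv]
  ext i j
  fin_cases i <;> fin_cases j <;>
    simp only [Matrix.inv_def, Matrix.adjugate_fin_two, Matrix.det_fin_two,
      Matrix.vecMulVec_apply, Matrix.mul_apply, Matrix.mulVec, dotProduct,
      Fin.sum_univ_two, Matrix.one_fin_two, Matrix.smul_apply, Matrix.sub_apply,
      Matrix.of_apply, Matrix.cons_val', Matrix.cons_val_zero, Matrix.cons_val_one,
      Matrix.head_cons, Matrix.head_fin_const, smul_eq_mul, Matrix.empty_val',
      Matrix.cons_val_fin_one, Fin.isValue, Fin.zero_eta, Fin.mk_one,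
      Ring.inverse_eq_inv', hc0, hc1, hb] <;>
  · have hdet3 : M 0 0 * M 1 1 - M 1 0 ^ 2 ≠ 0 := by rwa [sq]
    field_simp
    rw [hQdef]
    ring
end

section
/- Let M be a symmetric positive definite 2×2 matrix, g ∈ ℝ² nonzero, g⊥ nonzero with gᵀg⊥ = 0, c ∈ ℝ, and u ∈ ℝ². Then argmin over {λ ∈ ℝ² : gᵀλ ≥ c} of ‖λ - u‖_M equals g⊥(g⊥ᵀ M g⊥)^{-1} g⊥ᵀ M u + M^{-1} g (gᵀ M^{-1} g)^{-1} max{c, gᵀu}. -/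
open Matrix

lemma aux_span (g gp w : Fin 2 → ℝ) (hg : g ≠ 0) (hgp : gp ≠ 0)
    (hperp : g ⬝ᵥ gp = 0) (hw : g ⬝ᵥ w = 0) : ∃ t : ℝ, w = t • gp := by
  simp only [dotProduct, Fin.sum_univ_two] at hperp hw
  have hgor : g 0 ≠ 0 ∨ g 1 ≠ 0 := by
    by_contra h; push_neg at h
    exact hg (funext fun i => by fin_cases i <;> simp [h.1, h.2])
  have hcross : w 0 * gp 1 - w 1 * gp 0 = 0 := by
    rcases hgor with h | h
    · have h0 : g 0 * (w 0 * gp 1 - w 1 * gp 0) = 0 := by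
        linear_combination gp 1 * hw - w 1 * hperp
      exact (mul_eq_zero.mp h0).resolve_left h
    · have h0 : g 1 * (w 0 * gp 1 - w 1 * gp 0) = 0 := by
        linear_combination w 0 * hperp - gp 0 * hw
      exact (mul_eq_zero.mp h0).resolve_left h
  have hgpor : gp 0 ≠ 0 ∨ gp 1 ≠ 0 := by
    by_contra h; push_neg at h
    exact hgp (funext fun i => by fin_cases i <;> simp [h.1, h.2])
  rcases hgpor with h | h
  · refine ⟨w 0 / gp 0, funext fun i => ?_⟩
    fin_cases i <;> simp [Pi.smul_apply] <;> field_simp <;> nlinarith [hcross]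
  · refine ⟨w 1 / gp 1, funext fun i => ?_⟩
    fin_cases i <;> simp [Pi.smul_apply] <;> field_simp <;> nlinarith [hcross]

/-- Closed form for the M-projection onto a half-plane: the minimizer of ‖λ - u‖_M over
{λ : gᵀλ ≥ c} equals g⊥(g⊥ᵀMg⊥)⁻¹g⊥ᵀM u + M⁻¹g(gᵀM⁻¹g)⁻¹ max{c, gᵀu}. -/
theorem stmt_6 (M : Matrix (Fin 2) (Fin 2) ℝ) (hM : M.PosDef) (hMsym : M.IsSymm)
    (g gp : Fin 2 → ℝ) (hg : g ≠ 0) (hgp : gp ≠ 0) (hperp : g ⬝ᵥ gp = 0)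
    (c : ℝ) (u : Fin 2 → ℝ) :
    let Q : (Fin 2 → ℝ) → ℝ := fun l => (l - u) ⬝ᵥ M.mulVec (l - u)
    let Λ : Set (Fin 2 → ℝ) := {l | c ≤ g ⬝ᵥ l}
    let lstar : Fin 2 → ℝ :=
      ((gp ⬝ᵥ M.mulVec gp)⁻¹ • (Matrix.vecMulVec gp gp * M)).mulVec u
        + ((g ⬝ᵥ M⁻¹.mulVec g)⁻¹ * max c (g ⬝ᵥ u)) • M⁻¹.mulVec g
    lstar ∈ Λ ∧ (∀ l ∈ Λ, Q lstar ≤ Q l) ∧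
      (∀ l ∈ Λ, (∀ m ∈ Λ, Q l ≤ Q m) → l = lstar) := by
  intro Q Λ lstar
  have hpos : ∀ x : Fin 2 → ℝ, x ≠ 0 → 0 < x ⬝ᵥ M *ᵥ x := fun x hx => by
    simpa using hM.re_dotProduct_pos hx
  have hMi : M⁻¹.PosDef := hM.inv
  have hposi : ∀ x : Fin 2 → ℝ, x ≠ 0 → 0 < x ⬝ᵥ M⁻¹ *ᵥ x := fun x hx => by
    simpa using hMi.re_dotProduct_pos hx
  have h1 : M * M⁻¹ = 1 := Matrix.mul_nonsing_inv M hM.det_pos.ne'.isUnit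
  have hsw : ∀ x y : Fin 2 → ℝ, x ⬝ᵥ M *ᵥ y = y ⬝ᵥ M *ᵥ x := fun x y => by
    rw [Matrix.dotProduct_mulVec, ← Matrix.mulVec_transpose, hMsym.eq, dotProduct_comm]
  set K := g ⬝ᵥ M⁻¹ *ᵥ g with hKdef
  set L := gp ⬝ᵥ M *ᵥ gp with hLdef
  have hK : 0 < K := hposi g hg
  have hL : 0 < L := hpos gp hgp
  set v : Fin 2 → ℝ := M⁻¹ *ᵥ g with hvdef
  have hMv : M *ᵥ v = g := by
    rw [hvdef, Matrix.mulVec_mulVec, h1, Matrix.one_mulVec]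
  set mx := max c (g ⬝ᵥ u) with hmx
  have hvmv : ∀ x : Fin 2 → ℝ, (Matrix.vecMulVec gp gp) *ᵥ x = (gp ⬝ᵥ x) • gp := fun x => by
    ext i; simp [Matrix.vecMulVec_apply, Matrix.mulVec, dotProduct, Fin.sum_univ_two]; ring
  have hlstar : lstar = (L⁻¹ * (gp ⬝ᵥ M *ᵥ u)) • gp + (K⁻¹ * mx) • v := by
    show (L⁻¹ • (Matrix.vecMulVec gp gp * M)) *ᵥ u + (K⁻¹ * mx) • v = _
    rw [Matrix.smul_mulVec, ← Matrix.mulVec_mulVec, hvmv, smul_smul]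
  have hgv : g ⬝ᵥ v = K := rfl
  have hgpMv : gp ⬝ᵥ M *ᵥ v = 0 := by
    rw [hMv, dotProduct_comm]; exact hperp
  have hvMv : v ⬝ᵥ M *ᵥ v = K := by rw [hsw, hMv, dotProduct_comm]
  have hvMgp : v ⬝ᵥ M *ᵥ gp = 0 := by rw [hsw]; exact hgpMv
  have hgl : g ⬝ᵥ lstar = mx := by
    rw [hlstar, dotProduct_add, dotProduct_smul, dotProduct_smul, hperp, hgv, smul_eq_mul,
      smul_eq_mul, mul_zero, zero_add]
    field_simp
  have hgpl : gp ⬝ᵥ M *ᵥ (lstar - u) = 0 := by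
    rw [Matrix.mulVec_sub, dotProduct_sub, hlstar, Matrix.mulVec_add, Matrix.mulVec_smul,
      Matrix.mulVec_smul, dotProduct_add, dotProduct_smul, dotProduct_smul, hgpMv]
    simp only [smul_eq_mul, mul_zero, add_zero, ← hLdef]
    field_simp
    ring
  have hdecomp : ∀ l : Fin 2 → ℝ, ∃ a b : ℝ,
      l - u = a • v + b • gp ∧ a * K = g ⬝ᵥ l - g ⬝ᵥ u ∧ b * L = gp ⬝ᵥ M *ᵥ (l - u) ∧
      Q l = a ^ 2 * K + b ^ 2 * L := by
    intro l
    set d := l - u with hd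
    set a := (g ⬝ᵥ d) / K with ha
    obtain ⟨b, hb⟩ := aux_span g gp (d - a • v) hg hgp hperp
      (by rw [dotProduct_sub, dotProduct_smul, hgv, ha, smul_eq_mul,
        div_mul_cancel₀ _ hK.ne', sub_self])
    have hdab : d = a • v + b • gp := by rw [← hb]; abel
    refine ⟨a, b, hdab, ?_, ?_, ?_⟩
    · rw [ha, div_mul_cancel₀ _ hK.ne', hd, dotProduct_sub]
    · rw [hdab, Matrix.mulVec_add, Matrix.mulVec_smul, Matrix.mulVec_smul, dotProduct_add,
        dotProduct_smul, dotProduct_smul, hgpMv, smul_eq_mul, smul_eq_mul, mul_zero, zero_add,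
        mul_comm]
    · show d ⬝ᵥ M *ᵥ d = _
      rw [hdab, Matrix.mulVec_add, Matrix.mulVec_smul, Matrix.mulVec_smul]
      simp only [dotProduct_add, add_dotProduct, dotProduct_smul, smul_dotProduct, smul_eq_mul,
        hvMv, hvMgp, hgpMv]
      ring
  obtain ⟨as, bs, hsab, hsa, hsb, hsQ⟩ := hdecomp lstar
  have hbs : bs = 0 := by
    rw [hgpl] at hsb
    rcases mul_eq_zero.mp hsb with h | h
    · exact h
    · exact absurd h hL.ne'
  have hasK : as * K = mx - g ⬝ᵥ u := by rw [hsa, hgl]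
  have hQs : Q lstar = as ^ 2 * K := by rw [hsQ, hbs]; ring
  have hmxu : 0 ≤ mx - g ⬝ᵥ u := by simp [hmx]
  have hcmx : c ≤ mx := le_max_left _ _
  have hΛmem : ∀ x : Fin 2 → ℝ, x ∈ Λ ↔ c ≤ g ⬝ᵥ x := fun _ => Iff.rfl
  clear_value K L v mx Q Λ lstar
  have hkey : ∀ a : ℝ, c - g ⬝ᵥ u ≤ a * K → (as * K) ^ 2 ≤ (a * K) ^ 2 := by
    intro a hge
    rcases max_cases c (g ⬝ᵥ u) with ⟨he, hle⟩ | ⟨he, hlt⟩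
    · have hme : as * K = c - g ⬝ᵥ u := by rw [hasK, hmx.trans he]
      exact pow_le_pow_left₀ (by linarith) (by linarith) 2
    · have hme : as * K = 0 := by rw [hasK, hmx.trans he]; ring
      rw [hme]; simpa using sq_nonneg (a * K)
  have hq2 : ∀ a : ℝ, (as * K) ^ 2 ≤ (a * K) ^ 2 → as ^ 2 * K ≤ a ^ 2 * K := by
    intro a hkey2
    rw [mul_pow, mul_pow] at hkey2
    have h := le_of_mul_le_mul_right hkey2 (by positivity : (0:ℝ) < K ^ 2)
    exact mul_le_mul_of_nonneg_right h hK.le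
  constructor
  · rw [hΛmem, hgl]; exact hcmx
  constructor
  · intro l hl
    obtain ⟨a, b, hab, haK, hbL, hQ⟩ := hdecomp l
    have hge : c - g ⬝ᵥ u ≤ a * K := by
      rw [haK]; have := (hΛmem l).mp hl; linarith
    rw [hQ, hQs]
    have h4 := hq2 a (hkey a hge)
    have h5 : 0 ≤ b ^ 2 * L := mul_nonneg (sq_nonneg b) hL.le
    linarith
  · intro l hl hmin
    obtain ⟨a, b, hab, haK, hbL, hQ⟩ := hdecomp l
    have hge : c - g ⬝ᵥ u ≤ a * K := by
      rw [haK]; have := (hΛmem l).mp hl; linarith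
    have h4 := hq2 a (hkey a hge)
    have hQle : Q l ≤ Q lstar := hmin lstar (by rw [hΛmem, hgl]; exact hcmx)
    rw [hQ, hQs] at hQle
    have hb0 : b = 0 := by
      have hb2 : b ^ 2 * L ≤ 0 := by linarith
      have hbsq : b ^ 2 ≤ 0 := by
        by_contra h
        push_neg at h
        have := mul_pos h hL
        linarith
      exact pow_eq_zero_iff two_ne_zero |>.mp (le_antisymm hbsq (sq_nonneg b))
    have haas : a * K = as * K := by
      have ha2 : a ^ 2 * K ≤ as ^ 2 * K := by rw [hb0] at hQle; linarith
      have h2 : (a * K) ^ 2 ≤ (as * K) ^ 2 := by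
        calc (a * K) ^ 2 = a ^ 2 * K * K := by ring
          _ ≤ as ^ 2 * K * K := mul_le_mul_of_nonneg_right ha2 hK.le
          _ = (as * K) ^ 2 := by ring
      have heq : (a * K) ^ 2 = (as * K) ^ 2 := le_antisymm h2 (hkey a hge)
      have hs0 : 0 ≤ as * K := by rw [hasK]; exact hmxu
      have hge2 : as * K ≤ a * K := by
        rcases max_cases c (g ⬝ᵥ u) with ⟨he, hle⟩ | ⟨he, hlt⟩
        · have hme : as * K = c - g ⬝ᵥ u := by rw [hasK, hmx.trans he]
          linarith
        · have hme : as * K = 0 := by rw [hasK, hmx.trans he]; ring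
          have haK0 : (a * K) ^ 2 = 0 := by rw [heq, hme]; ring
          rw [hme, pow_eq_zero_iff two_ne_zero |>.mp haK0]
      have h5 : (a * K - as * K) ^ 2 ≤ 0 := by
        nlinarith [mul_nonneg hs0 (sub_nonneg.mpr hge2), heq]
      have h6 : a * K - as * K = 0 :=
        pow_eq_zero_iff two_ne_zero |>.mp (le_antisymm h5 (sq_nonneg _))
      linarith
    have ha : a = as := mul_right_cancel₀ hK.ne' haas
    have hlu : l - u = lstar - u := by rw [hab, hsab, ha, hbs, hb0]
    exact sub_left_inj.mp hlu
end

section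
/- Let ξ ∼ N(0, σ²I₂), σ > 0, and for a symmetric positive definite 2×2 matrix B, nonzero g ∈ ℝ², nonzero g⊥ with gᵀg⊥ = 0, define l(B) := g⊥(g⊥ᵀBg⊥)^{-1}g⊥ᵀB^{1/2}ξ + B^{-1}g(gᵀB^{-1}g)^{-1} max{0, gᵀB^{-1/2}ξ}. Let φ : ℝ² → ℝ be measurable and a ∈ ℝ. If P(φ(l(B)) = a) > 0 for some symmetric positive definite B, then P(φ(l(D)) = a) > 0 for every symmetric positive definite D. -/
open MeasureTheory ProbabilityTheory Matrix
open scoped NNReal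

lemma aux_ne_zero_iff (v : Fin 2 → ℝ) : v ≠ 0 ↔ v 0 ≠ 0 ∨ v 1 ≠ 0 := by
  constructor
  · intro h; by_contra hc; push_neg at hc
    exact h (funext fun i => by fin_cases i <;> simp [hc.1, hc.2])
  · rintro (h | h) hv <;> simp [hv] at h

lemma aux_det1 (p q : Fin 2 → ℝ) (hp : p ≠ 0) (hq : q ≠ 0) (hpq : p ⬝ᵥ q = 0) :
    (Matrix.of ![p, q]).det ≠ 0 := by
  rw [Matrix.det_fin_two]
  simp only [Matrix.of_apply, Matrix.cons_val', Matrix.cons_val_zero, Matrix.cons_val_one,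
    Matrix.head_cons, Matrix.empty_val', Matrix.cons_val_fin_one, Matrix.vecHead]
  intro h
  rw [show p ⬝ᵥ q = p 0 * q 0 + p 1 * q 1 by simp [dotProduct, Fin.sum_univ_two]] at hpq
  have hkey : (p 0 ^ 2 + p 1 ^ 2) * (q 0 ^ 2 + q 1 ^ 2) = 0 := by nlinarith [hpq, h]
  rcases mul_eq_zero.mp hkey with hk | hk
  · rcases (aux_ne_zero_iff p).1 hp with h0 | h0 <;>
      nlinarith [sq_nonneg (p 0), sq_nonneg (p 1), pow_two_pos_of_ne_zero h0]
  · rcases (aux_ne_zero_iff q).1 hq with h0 | h0 <;>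
      nlinarith [sq_nonneg (q 0), sq_nonneg (q 1), pow_two_pos_of_ne_zero h0]

lemma aux_det2 (g gp w : Fin 2 → ℝ) (c d : ℝ) (hc : c ≠ 0) (hd : d ≠ 0)
    (hperp : g ⬝ᵥ gp = 0) (hgw : 0 < g ⬝ᵥ w) (hgp : gp ≠ 0) :
    (Matrix.of ![c • gp, d • w]).det ≠ 0 := by
  rw [Matrix.det_fin_two]
  simp only [Matrix.of_apply, Matrix.cons_val', Matrix.cons_val_zero, Matrix.cons_val_one,
    Matrix.head_cons, Matrix.empty_val', Matrix.cons_val_fin_one, Matrix.vecHead,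
    Pi.smul_apply, smul_eq_mul]
  intro h
  rw [show g ⬝ᵥ gp = g 0 * gp 0 + g 1 * gp 1 by simp [dotProduct, Fin.sum_univ_two]] at hperp
  rw [show g ⬝ᵥ w = g 0 * w 0 + g 1 * w 1 by simp [dotProduct, Fin.sum_univ_two]] at hgw
  have hx : gp 0 * w 1 - gp 1 * w 0 = 0 := by
    have hcd : c * d ≠ 0 := mul_ne_zero hc hd
    have h2 : c * d * (gp 0 * w 1 - gp 1 * w 0) = 0 := by linarith [h]
    rcases mul_eq_zero.mp h2 with h' | h'
    · exact absurd h' hcd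
    · exact h'
  have hgppos : 0 < gp 0 ^ 2 + gp 1 ^ 2 := by
    rcases (aux_ne_zero_iff gp).1 hgp with h0 | h0 <;>
      nlinarith [sq_nonneg (gp 0), sq_nonneg (gp 1), pow_two_pos_of_ne_zero h0]
  have hid : (g 0 * w 0 + g 1 * w 1) * (gp 0 ^ 2 + gp 1 ^ 2)
      = (g 0 * gp 0 + g 1 * gp 1) * (w 0 * gp 0 + w 1 * gp 1)
        + (g 0 * gp 1 - g 1 * gp 0) * (w 0 * gp 1 - w 1 * gp 0) := by ring
  rw [hperp, zero_mul, zero_add] at hid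
  have h3 : w 0 * gp 1 - w 1 * gp 0 = 0 := by linarith [hx]
  rw [h3, mul_zero] at hid
  nlinarith [hgw, hgppos, hid]

lemma aux_null_preimage (M : Matrix (Fin 2) (Fin 2) ℝ) (hM : M.det ≠ 0)
    (A : Set (Fin 2 → ℝ)) (hA : MeasurableSet A) :
    volume ((fun x => M *ᵥ x) ⁻¹' A) = 0 ↔ volume A = 0 := by
  have h : (fun x : Fin 2 → ℝ => M *ᵥ x) = ⇑(Matrix.toLin' M) := by
    funext x; simp [Matrix.toLin'_apply]
  have hmeas : Measurable (⇑(Matrix.toLin' M)) :=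
    (Matrix.toLin' M).continuous_of_finiteDimensional.measurable
  rw [h, ← Measure.map_apply hmeas hA, Real.map_matrix_volume_pi_eq_smul_volume_pi hM,
    Measure.smul_apply, smul_eq_mul, mul_eq_zero]
  have hne : ENNReal.ofReal |M.det⁻¹| ≠ 0 := by
    rw [Ne, ENNReal.ofReal_eq_zero, not_le, abs_pos]
    exact inv_ne_zero hM
  simp [hne, hM]

lemma aux_mulVec_meas (M : Matrix (Fin 2) (Fin 2) ℝ) :
    Measurable (fun x : Fin 2 → ℝ => M *ᵥ x) := by
  have h : (fun x : Fin 2 → ℝ => M *ᵥ x) = ⇑(Matrix.toLin' M) := by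
    funext x; simp [Matrix.toLin'_apply]
  rw [h]
  exact (Matrix.toLin' M).continuous_of_finiteDimensional.measurable

lemma aux_pi_gauss_null (σ : ℝ≥0) (hσ : σ ≠ 0) (A : Set (Fin 2 → ℝ)) :
    Measure.pi (fun _ : Fin 2 => gaussianReal 0 σ) A = 0 ↔ volume A = 0 := by
  set γ : Measure ℝ := gaussianReal 0 σ with hγ
  have h1 : MeasurePreserving (MeasurableEquiv.piFinTwo (fun _ : Fin 2 => ℝ))
      (Measure.pi fun _ => γ) (γ.prod γ) := measurePreserving_piFinTwo _
  have h2 : MeasurePreserving (MeasurableEquiv.piFinTwo (fun _ : Fin 2 => ℝ))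
      (volume : Measure (Fin 2 → ℝ)) (volume.prod volume) := by
    rw [MeasureTheory.volume_pi]; exact measurePreserving_piFinTwo _
  have e1 := h1.symm (MeasurableEquiv.piFinTwo (fun _ : Fin 2 => ℝ))
  have e2 := h2.symm (MeasurableEquiv.piFinTwo (fun _ : Fin 2 => ℝ))
  rw [← e1.map_eq, ← e2.map_eq]
  have hac : γ.prod γ ≪ volume.prod volume :=
    (gaussianReal_absolutelyContinuous _ hσ).prod (gaussianReal_absolutelyContinuous _ hσ)
  have hac' : (volume.prod volume : Measure (ℝ × ℝ)) ≪ γ.prod γ :=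
    (gaussianReal_absolutelyContinuous' _ hσ).prod (gaussianReal_absolutelyContinuous' _ hσ)
  constructor
  · intro h; exact (hac'.map (MeasurableEquiv.piFinTwo (fun _ : Fin 2 => ℝ)).symm.measurable) h
  · intro h; exact (hac.map (MeasurableEquiv.piFinTwo (fun _ : Fin 2 => ℝ)).symm.measurable) h

lemma aux_pointwise (B Q : Matrix (Fin 2) (Fin 2) ℝ) (hQsym : Q.IsSymm)
    (g gp x : Fin 2 → ℝ) :
    ((gp ⬝ᵥ B.mulVec gp)⁻¹ • (Matrix.vecMulVec gp gp * Q)).mulVec x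
        + ((g ⬝ᵥ B⁻¹.mulVec g)⁻¹ * max 0 (g ⬝ᵥ Q⁻¹.mulVec x)) • B⁻¹.mulVec g
      = ((gp ⬝ᵥ B *ᵥ gp)⁻¹ * ((Q *ᵥ gp) ⬝ᵥ x)) • gp
        + ((g ⬝ᵥ (B⁻¹ *ᵥ g))⁻¹ * max 0 ((Q⁻¹ *ᵥ g) ⬝ᵥ x)) • (B⁻¹ *ᵥ g) := by
  have h1 : gp ⬝ᵥ (Q *ᵥ x) = (Q *ᵥ gp) ⬝ᵥ x := by
    rw [Matrix.dotProduct_mulVec, ← Matrix.mulVec_transpose, hQsym.eq]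
  have hQinvsym : Q⁻¹.IsSymm := by
    unfold Matrix.IsSymm; rw [Matrix.transpose_nonsing_inv, hQsym.eq]
  have h2 : g ⬝ᵥ (Q⁻¹ *ᵥ x) = (Q⁻¹ *ᵥ g) ⬝ᵥ x := by
    rw [Matrix.dotProduct_mulVec, ← Matrix.mulVec_transpose, hQinvsym.eq]
  have h3 : (Matrix.vecMulVec gp gp * Q) *ᵥ x = (gp ⬝ᵥ (Q *ᵥ x)) • gp := by
    rw [← Matrix.mulVec_mulVec]
    funext i; simp [Matrix.vecMulVec, Matrix.mulVec, dotProduct, Finset.mul_sum]; ring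
  rw [Matrix.smul_mulVec, h3, h1, h2, smul_smul]

lemma aux_rowvec_mulVec (p q x : Fin 2 → ℝ) :
    (Matrix.of ![p, q]) *ᵥ x = ![p ⬝ᵥ x, q ⬝ᵥ x] := by
  funext i; fin_cases i <;> simp [Matrix.mulVec]

lemma aux_colvec_mulVec (u v z : Fin 2 → ℝ) :
    (Matrix.of ![u, v])ᵀ *ᵥ z = z 0 • u + z 1 • v := by
  funext j
  rw [Matrix.mulVec_transpose]
  simp [Matrix.vecMul, dotProduct, Fin.sum_univ_two]

/-- With ξ ∼ N(0, σ²I₂) and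
l(B) := g⊥(g⊥ᵀBg⊥)⁻¹g⊥ᵀB^{1/2}ξ + B⁻¹g(gᵀB⁻¹g)⁻¹ max{0, gᵀB^{-1/2}ξ},
if P(φ(l(B)) = a) > 0 for some symmetric positive definite B, then P(φ(l(D)) = a) > 0 for
every symmetric positive definite D. -/
theorem stmt_9
    {Ω : Type*} [MeasurableSpace Ω] (P : Measure Ω) [IsProbabilityMeasure P]
    (σ : ℝ≥0) (hσ : 0 < σ)
    (ξ : Ω → Fin 2 → ℝ) (hξmeas : ∀ i, Measurable fun ω => ξ ω i)
    (hξlaw : ∀ i, Measure.map (fun ω => ξ ω i) P = gaussianReal 0 (σ ^ 2))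
    (hξindep : iIndepFun (fun i ω => ξ ω i) P)
    (g gp : Fin 2 → ℝ) (hg : g ≠ 0) (hgp : gp ≠ 0) (hperp : g ⬝ᵥ gp = 0)
    (sqrt : Matrix (Fin 2) (Fin 2) ℝ → Matrix (Fin 2) (Fin 2) ℝ)
    (hsqrt : ∀ B : Matrix (Fin 2) (Fin 2) ℝ, B.PosDef → B.IsSymm →
      (sqrt B).PosDef ∧ (sqrt B).IsSymm ∧ sqrt B * sqrt B = B)
    (l : Matrix (Fin 2) (Fin 2) ℝ → Ω → Fin 2 → ℝ)
    (hl : ∀ B ω, l B ω =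
      ((gp ⬝ᵥ B.mulVec gp)⁻¹ • (Matrix.vecMulVec gp gp * sqrt B)).mulVec (ξ ω)
        + ((g ⬝ᵥ B⁻¹.mulVec g)⁻¹ * max 0 (g ⬝ᵥ (sqrt B)⁻¹.mulVec (ξ ω)))
            • B⁻¹.mulVec g)
    (φ : (Fin 2 → ℝ) → ℝ) (hφ : Measurable φ) (a : ℝ)
    (B : Matrix (Fin 2) (Fin 2) ℝ) (hB : B.PosDef) (hBsym : B.IsSymm)
    (hpos : 0 < P {ω | φ (l B ω) = a}) :
    ∀ D : Matrix (Fin 2) (Fin 2) ℝ, D.PosDef → D.IsSymm →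
      0 < P {ω | φ (l D ω) = a} := by
  -- setup
  have hξm : Measurable ξ := measurable_pi_iff.2 hξmeas
  set S : Set (Fin 2 → ℝ) := φ ⁻¹' {a} with hS_def
  have hSm : MeasurableSet S := hφ (measurableSet_singleton a)
  set H : Set (Fin 2 → ℝ) := {x | 0 < g ⬝ᵥ x} with hH_def
  have hdotmeas : ∀ v : Fin 2 → ℝ, Measurable fun x : Fin 2 → ℝ => v ⬝ᵥ x := by
    intro v
    simp only [dotProduct]
    exact Finset.measurable_sum _ fun i _ => (measurable_pi_apply i).const_mul _
  have hHm : MeasurableSet H := measurableSet_lt measurable_const (hdotmeas g)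
  -- law of ξ
  have hγmap : Measure.map ξ P = Measure.pi (fun _ : Fin 2 => gaussianReal 0 (σ ^ 2)) := by
    refine (Measure.pi_eq fun s hs => ?_).symm
    rw [Measure.map_apply hξm (MeasurableSet.univ_pi hs)]
    have hpre : ξ ⁻¹' Set.univ.pi s
        = ⋂ i ∈ (Finset.univ : Finset (Fin 2)), (fun ω => ξ ω i) ⁻¹' s i := by
      ext ω; simp [Set.mem_pi]
    rw [hpre, hξindep.measure_inter_preimage_eq_mul _ (fun i _ => hs i)]
    refine Finset.prod_congr rfl fun i _ => ?_
    rw [← hξlaw i, Measure.map_apply (hξmeas i) (hs i)]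
  have hσ2 : (σ : ℝ≥0) ^ 2 ≠ 0 := pow_ne_zero 2 hσ.ne'
  -- key characterization
  have key : ∀ C : Matrix (Fin 2) (Fin 2) ℝ, C.PosDef → C.IsSymm →
      (P {ω | φ (l C ω) = a} = 0 ↔
        (volume (S ∩ H) = 0 ∧ volume ((fun t : ℝ => t • gp) ⁻¹' S) = 0)) := by
    intro C hC hCsym
    obtain ⟨hQpd, hQsym, hQQ⟩ := hsqrt C hC hCsym
    have hQdet : (sqrt C).det ≠ 0 := hQpd.det_pos.ne'
    have hCinvpd : C⁻¹.PosDef := hC.inv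
    set w : Fin 2 → ℝ := C⁻¹ *ᵥ g with hw_def
    have hgw : 0 < g ⬝ᵥ w := by simpa only [star_trivial] using hCinvpd.dotProduct_mulVec_pos hg
    have hgpCgp : 0 < gp ⬝ᵥ (C *ᵥ gp) := by simpa using hC.dotProduct_mulVec_pos hgp
    set c : ℝ := (gp ⬝ᵥ C *ᵥ gp)⁻¹ with hc_def
    have hc : 0 < c := inv_pos.2 hgpCgp
    set dd : ℝ := (g ⬝ᵥ w)⁻¹ with hdd_def
    have hd : 0 < dd := inv_pos.2 hgw
    set p : Fin 2 → ℝ := sqrt C *ᵥ gp with hp_def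
    set q : Fin 2 → ℝ := (sqrt C)⁻¹ *ᵥ g with hq_def
    have hp0 : p ≠ 0 := by
      intro h
      have h2 : 0 < gp ⬝ᵥ p := by simpa only [star_trivial] using hQpd.dotProduct_mulVec_pos hgp
      rw [h] at h2; simp at h2
    have hq0 : q ≠ 0 := by
      intro h
      have h2 : 0 < g ⬝ᵥ q := by simpa only [star_trivial] using hQpd.inv.dotProduct_mulVec_pos hg
      rw [h] at h2; simp at h2
    have hQinvsym : (sqrt C)⁻¹.IsSymm := by
      unfold Matrix.IsSymm; rw [Matrix.transpose_nonsing_inv, hQsym.eq]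
    have hpq : p ⬝ᵥ q = 0 := by
      rw [hp_def, hq_def, Matrix.dotProduct_mulVec, ← Matrix.mulVec_transpose, hQinvsym.eq,
        Matrix.mulVec_mulVec, Matrix.nonsing_inv_mul _ (isUnit_iff_ne_zero.2 hQdet),
        Matrix.one_mulVec, dotProduct_comm, hperp]
    set F2 : (Fin 2 → ℝ) → (Fin 2 → ℝ) :=
      fun z => (c * z 0) • gp + (dd * max 0 (z 1)) • w with hF2_def
    have hF2cont : Continuous F2 := by
      apply Continuous.add
      · exact ((continuous_const.mul (continuous_apply 0)).smul continuous_const)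
      · exact ((continuous_const.mul (continuous_const.max (continuous_apply 1))).smul
          continuous_const)
    set M : Matrix (Fin 2) (Fin 2) ℝ := Matrix.of ![p, q] with hM_def
    have hMdet : M.det ≠ 0 := aux_det1 p q hp0 hq0 hpq
    -- pointwise identity
    have hstep : ∀ ω, l C ω = F2 (M *ᵥ ξ ω) := by
      intro ω
      rw [hl, hM_def, aux_rowvec_mulVec, hF2_def]
      simp only [Matrix.cons_val_zero, Matrix.cons_val_one, Matrix.head_cons]
      exact aux_pointwise C (sqrt C) hQsym g gp (ξ ω)
    -- event rewriting
    have hev : {ω | φ (l C ω) = a} = ξ ⁻¹' ((fun x => F2 (M *ᵥ x)) ⁻¹' S) := by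
      ext ω
      simp only [Set.mem_setOf_eq, Set.mem_preimage, hstep ω, hS_def, Set.mem_singleton_iff]
    have hcompmeas : Measurable fun x => F2 (M *ᵥ x) :=
      hF2cont.measurable.comp (aux_mulVec_meas M)
    have hstep1 : P {ω | φ (l C ω) = a} = 0 ↔ volume (F2 ⁻¹' S) = 0 := by
      rw [hev, ← Measure.map_apply hξm (hcompmeas hSm), hγmap,
        aux_pi_gauss_null _ hσ2]
      exact aux_null_preimage M hMdet (F2 ⁻¹' S) (hF2cont.measurable hSm)
    -- split F2 ⁻¹' S
    set T : Matrix (Fin 2) (Fin 2) ℝ := (Matrix.of ![c • gp, dd • w])ᵀ with hT_def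
    have hTdet : T.det ≠ 0 := by
      rw [hT_def, Matrix.det_transpose]
      exact aux_det2 g gp w c dd hc.ne' hd.ne' hperp hgw hgp
    have hT : ∀ z : Fin 2 → ℝ, T *ᵥ z = (c * z 0) • gp + (dd * z 1) • w := by
      intro z
      rw [hT_def, aux_colvec_mulVec, smul_smul, smul_smul, mul_comm (z 0) c, mul_comm (z 1) dd]
    have hgwdd : dd * (g ⬝ᵥ w) = 1 := inv_mul_cancel₀ hgw.ne'
    have hgT : ∀ z : Fin 2 → ℝ, g ⬝ᵥ (T *ᵥ z) = z 1 := by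
      intro z
      rw [hT z]
      rw [show g ⬝ᵥ ((c * z 0) • gp + (dd * z 1) • w)
          = (c * z 0) * (g ⬝ᵥ gp) + (dd * z 1) * (g ⬝ᵥ w) by
        simp [dotProduct, Fin.sum_univ_two]; ring]
      rw [hperp, mul_zero, zero_add]
      calc dd * z 1 * (g ⬝ᵥ w) = z 1 * (dd * (g ⬝ᵥ w)) := by ring
      _ = z 1 := by rw [hgwdd, mul_one]
    set U : Set (Fin 2 → ℝ) := {z | 0 < z 1} with hU_def
    have hUm : MeasurableSet U := measurableSet_lt measurable_const (measurable_pi_apply 1)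
    set A₁ : Set ℝ := (fun t : ℝ => (c * t) • gp) ⁻¹' S with hA1_def
    have hset1 : F2 ⁻¹' S ∩ U = (fun z => T *ᵥ z) ⁻¹' (S ∩ H) := by
      ext z
      simp only [Set.mem_inter_iff, Set.mem_preimage, hU_def, Set.mem_setOf_eq, hH_def]
      constructor
      · rintro ⟨hzS, hz1⟩
        have hmax : max 0 (z 1) = z 1 := max_eq_right hz1.le
        have hFz : F2 z = T *ᵥ z := by rw [hT z, hF2_def]; simp only [hmax]
        rw [← hFz]
        exact ⟨hzS, by rw [hFz] at *; rw [hgT z]; exact hz1⟩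
      · rintro ⟨hzS, hzH⟩
        rw [hgT z] at hzH
        have hmax : max 0 (z 1) = z 1 := max_eq_right hzH.le
        have hFz : F2 z = T *ᵥ z := by rw [hT z, hF2_def]; simp only [hmax]
        rw [hFz]
        exact ⟨hzS, hzH⟩
    have hset2 : F2 ⁻¹' S \ U = Set.univ.pi ![A₁, Set.Iic 0] := by
      ext z
      simp only [Set.mem_diff, Set.mem_preimage, hU_def, Set.mem_setOf_eq, not_lt,
        Set.mem_univ_pi, Fin.forall_fin_two]
      simp only [Matrix.cons_val_zero, Matrix.cons_val_one, Matrix.head_cons, Set.mem_Iic,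
        hA1_def, Set.mem_preimage]
      constructor
      · rintro ⟨hzS, hz1⟩
        have hmax : max 0 (z 1) = 0 := max_eq_left hz1
        have hFz : F2 z = (c * z 0) • gp := by
          rw [hF2_def]; simp only [hmax, mul_zero, zero_smul, add_zero]
        rw [hFz] at hzS
        exact ⟨hzS, hz1⟩
      · rintro ⟨hzS, hz1⟩
        have hmax : max 0 (z 1) = 0 := max_eq_left hz1
        have hFz : F2 z = (c * z 0) • gp := by
          rw [hF2_def]; simp only [hmax, mul_zero, zero_smul, add_zero]
        rw [hFz]
        exact ⟨hzS, hz1⟩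
    have hsplit : volume (F2 ⁻¹' S)
        = volume ((fun z => T *ᵥ z) ⁻¹' (S ∩ H)) + volume (Set.univ.pi ![A₁, Set.Iic 0]) := by
      rw [← hset1, ← hset2]
      exact (measure_inter_add_diff _ hUm).symm
    have hpiece1 : volume ((fun z => T *ᵥ z) ⁻¹' (S ∩ H)) = 0 ↔ volume (S ∩ H) = 0 :=
      aux_null_preimage T hTdet (S ∩ H) (hSm.inter hHm)
    have hsmulmeas : Measurable fun t : ℝ => t • gp := measurable_id.smul_const gp
    have hVm : MeasurableSet ((fun t : ℝ => t • gp) ⁻¹' S) := hsmulmeas hSm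
    have hA1iff : volume A₁ = 0 ↔ volume ((fun t : ℝ => t • gp) ⁻¹' S) = 0 := by
      have hA1eq : A₁ = (fun t : ℝ => c * t) ⁻¹' ((fun t : ℝ => t • gp) ⁻¹' S) := rfl
      rw [hA1eq, ← Measure.map_apply (f := fun t : ℝ => c * t) (by fun_prop) hVm,
        Real.map_volume_mul_left hc.ne', Measure.smul_apply, smul_eq_mul, mul_eq_zero]
      have hne : ENNReal.ofReal |c⁻¹| ≠ 0 := by
        rw [Ne, ENNReal.ofReal_eq_zero, not_le, abs_pos]
        exact inv_ne_zero hc.ne'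
      simp [hne, hc.ne']
    have hpiece2 : volume (Set.univ.pi ![A₁, Set.Iic 0]) = 0 ↔ volume A₁ = 0 := by
      rw [volume_pi_pi]
      simp only [Fin.prod_univ_two, Matrix.cons_val_zero, Matrix.cons_val_one, Matrix.head_cons,
        Real.volume_Iic]
      rw [mul_eq_zero]
      simp
    rw [hstep1, hsplit, add_eq_zero, hpiece1, hpiece2, hA1iff]
  -- conclude
  intro D hD hDsym
  refine pos_iff_ne_zero.2 fun h0 => ?_
  exact hpos.ne' ((key B hB hBsym).2 ((key D hD hDsym).1 h0))
end

section
/- Let g(θ) = θ₂ on ℝ² (so Θ = ℝ × [0,∞), ∂Θ = ℝ × {0}), let M be symmetric positive definite, ξ ∼ N(0, σ²I₂) with σ > 0 independent of M, and let ℓ := argmin_{λ: λ₂ ≥ 0} ‖λ - M^{-1/2}ξ‖_M. Let h(θ) = θ₁ + θ₂. Then almost surely the distribution of h(ℓ) = ℓ₁ + ℓ₂ conditional on M is not symmetric about 0 whenever (1,1) is not proportional to a vector making gᵀM^{-1}(1,1)ᵀ = 0; in particular, conditional on M, P(ℓ₁ + ℓ₂ > t) ≠ P(ℓ₁ + ℓ₂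 < -t) for some t > 0. -/
open MeasureTheory ProbabilityTheory Matrix
open scoped NNReal

section auxhelpers
open Real
variable {v : ℝ≥0}

lemma aux_integrable_id_gaussian (hv : v ≠ 0) :
    Integrable (fun x : ℝ => x) (gaussianReal 0 v) := by
  rw [gaussianReal_of_var_ne_zero 0 hv,
    integrable_withDensity_iff (measurable_gaussianPDF 0 v)
      (Filter.Eventually.of_forall fun x => ENNReal.ofReal_lt_top)]
  have hb : (0:ℝ) < (2 * (v:ℝ))⁻¹ := by positivity
  have heq : (fun x : ℝ => x * (gaussianPDF 0 v x).toReal)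
      = fun x => (√(2 * π * v))⁻¹ * (x * rexp (-(2 * (v:ℝ))⁻¹ * x ^ 2)) := by
    funext x
    rw [gaussianPDF, ENNReal.toReal_ofReal (gaussianPDFReal_nonneg _ _ _), gaussianPDFReal]
    have : -(x - 0) ^ 2 / (2 * (v:ℝ)) = -(2 * (v:ℝ))⁻¹ * x ^ 2 := by
      field_simp
      ring
    rw [this]; ring
  rw [heq]
  exact (integrable_mul_exp_neg_mul_sq hb).const_mul _

lemma aux_gaussian_Iio_pos (hv : v ≠ 0) (r : ℝ) :
    0 < gaussianReal 0 v (Set.Iio r) := by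
  rw [gaussianReal_of_var_ne_zero 0 hv, withDensity_apply _ measurableSet_Iio]
  rw [lintegral_pos_iff_support (measurable_gaussianPDF 0 v)]
  have : Function.support (gaussianPDF 0 v) = Set.univ := by
    ext x; simp [Function.support, (gaussianPDF_pos 0 hv x).ne']
  rw [this, Measure.restrict_apply_univ]
  simp [Real.volume_Iio]

lemma aux_gaussian_map_neg :
    Measure.map (fun x : ℝ => -x) (gaussianReal 0 v) = gaussianReal 0 v := by
  simpa using gaussianReal_map_neg (μ := 0) (v := v)

end auxhelpers

lemma aux_proj (M : Matrix (Fin 2) (Fin 2) ℝ) (hM : M.PosDef) (hMsym : M.IsSymm)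
    (w : Fin 2 → ℝ) (c : ℝ) (hc : 0 < c)
    (hw : M.mulVec w = c⁻¹ • (fun i => if i = 1 then (1:ℝ) else 0)) (hw1 : w 1 = 1)
    (z l : Fin 2 → ℝ) (hl1 : 0 ≤ l 1)
    (hmin : ∀ l' : Fin 2 → ℝ, 0 ≤ l' 1 →
      (l - z) ⬝ᵥ M.mulVec (l - z) ≤ (l' - z) ⬝ᵥ M.mulVec (l' - z)) :
    l = if 0 ≤ z 1 then z else z - z 1 • w := by
  have h01 : M 0 1 = M 1 0 := by
    have := congrFun (congrFun hMsym 1) 0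
    simpa [Matrix.transpose_apply] using this
  have hsym : ∀ x y : Fin 2 → ℝ, x ⬝ᵥ M.mulVec y = y ⬝ᵥ M.mulVec x := by
    intro x y
    simp only [dotProduct, mulVec, Fin.sum_univ_two, h01]
    ring
  set cand : Fin 2 → ℝ := if 0 ≤ z 1 then z else z - z 1 • w with hcand
  have hcand1 : 0 ≤ cand 1 := by
    rw [hcand]; split_ifs with h
    · exact h
    · simp [hw1]
  have hcandsub1 : cand 1 = if 0 ≤ z 1 then z 1 else 0 := by
    rw [hcand]; split_ifs with h
    · rfl
    · simp [hw1]
  have hcross : 0 ≤ (cand - z) ⬝ᵥ M.mulVec (l - cand) := by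
    rcases le_or_gt 0 (z 1) with h | h
    · have : cand = z := by rw [hcand, if_pos h]
      simp [this]
    · have hz : cand - z = (-(z 1)) • w := by
        rw [hcand, if_neg (not_le.mpr h), sub_sub_cancel_left, ← neg_smul]
      rw [hz, smul_dotProduct]
      have hterm : w ⬝ᵥ M.mulVec (l - cand) = c⁻¹ * l 1 := by
        rw [hsym, hw]
        simp only [dotProduct, Fin.sum_univ_two, Pi.smul_apply, Pi.sub_apply, smul_eq_mul,
          hcandsub1, if_neg (not_le.mpr h)]
        norm_num
        ring
      rw [hterm, smul_eq_mul]
      exact mul_nonneg (neg_nonneg.mpr h.le) (mul_nonneg (inv_nonneg.mpr hc.le) hl1)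
  have hident : (l - z) ⬝ᵥ M.mulVec (l - z)
      = (cand - z) ⬝ᵥ M.mulVec (cand - z) + (l - cand) ⬝ᵥ M.mulVec (l - cand)
        + 2 * ((cand - z) ⬝ᵥ M.mulVec (l - cand)) := by
    have h1 : l - z = (l - cand) + (cand - z) := by
      rw [sub_add_sub_cancel]
    rw [h1, mulVec_add, dotProduct_add, add_dotProduct, add_dotProduct,
      hsym (l - cand) (cand - z)]
    ring
  have hle := hmin cand hcand1
  have hd : (l - cand) ⬝ᵥ M.mulVec (l - cand) ≤ 0 := by linarith
  have hzero : l - cand = 0 := by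
    by_contra hne
    have := hM.dotProduct_mulVec_pos hne
    simp only [star_trivial] at this
    linarith
  rw [hcand] at hzero ⊢
  exact sub_eq_zero.mp hzero


/-- With g(θ) = θ₂ (boundary {λ₂ = 0}), M symmetric positive definite with square root S,
ξ ∼ N(0, σ²I₂), and ℓ the M-projection of M^{-1/2}ξ onto {λ : λ₂ ≥ 0}, the conditional
(given M) distribution of h(ℓ) = ℓ₁ + ℓ₂ is not symmetric about 0 whenever
gᵀM⁻¹(1,1)ᵀ ≠ 0: there is t > 0 with P(ℓ₁ + ℓ₂ > t) ≠ P(ℓ₁ + ℓ₂ < -t). -/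
theorem stmt_18
    {Ω : Type*} [MeasurableSpace Ω] (P : Measure Ω) [IsProbabilityMeasure P]
    (M S : Matrix (Fin 2) (Fin 2) ℝ) (hM : M.PosDef) (hMsym : M.IsSymm)
    (hS : S.PosDef) (hSsym : S.IsSymm) (hSsq : S * S = M)
    (σ : ℝ≥0) (hσ : 0 < σ)
    (ξ : Ω → Fin 2 → ℝ) (hξmeas : ∀ i, Measurable fun ω => ξ ω i)
    (hξlaw : ∀ i, Measure.map (fun ω => ξ ω i) P = gaussianReal 0 (σ ^ 2))
    (hξindep : iIndepFun (fun i ω => ξ ω i) P)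
    (hnondeg : (fun i : Fin 2 => if i = 1 then (1:ℝ) else 0) ⬝ᵥ
        M⁻¹.mulVec (fun _ : Fin 2 => (1:ℝ)) ≠ 0)
    (ℓ : Ω → Fin 2 → ℝ)
    (hℓmem : ∀ ω, 0 ≤ ℓ ω 1)
    (hℓmin : ∀ ω, ∀ l : Fin 2 → ℝ, 0 ≤ l 1 →
      (ℓ ω - S⁻¹.mulVec (ξ ω)) ⬝ᵥ M.mulVec (ℓ ω - S⁻¹.mulVec (ξ ω))
        ≤ (l - S⁻¹.mulVec (ξ ω)) ⬝ᵥ M.mulVec (l - S⁻¹.mulVec (ξ ω))) :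
    ∃ t > (0:ℝ), P {ω | t < ℓ ω 0 + ℓ ω 1} ≠ P {ω | ℓ ω 0 + ℓ ω 1 < -t} := by
  -- basic objects
  set e : Fin 2 → ℝ := fun i => if i = 1 then (1:ℝ) else 0 with he
  have he0 : e ≠ 0 := by
    intro h
    have := congrFun h 1
    simp [he] at this
  have hv : (σ ^ 2 : ℝ≥0) ≠ 0 := pow_ne_zero _ hσ.ne'
  set ν : Measure ℝ := gaussianReal 0 (σ ^ 2) with hν
  have hMinv : M⁻¹.PosDef := hM.inv
  have hA : S⁻¹.PosDef := hS.inv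
  have hdet : IsUnit M.det := isUnit_iff_ne_zero.mpr hM.det_pos.ne'
  -- c > 0
  have hc0 : 0 < M⁻¹ 1 1 := by
    have := hMinv.dotProduct_mulVec_pos he0
    simp only [star_trivial] at this
    simpa [he, dotProduct, mulVec, Fin.sum_univ_two] using this
  set c : ℝ := M⁻¹ 1 1 with hcdef
  set w : Fin 2 → ℝ := c⁻¹ • M⁻¹.mulVec e with hwdef
  have hw : M.mulVec w = c⁻¹ • e := by
    rw [hwdef, mulVec_smul, mulVec_mulVec, Matrix.mul_nonsing_inv M hdet, one_mulVec]
  have hw1 : w 1 = 1 := by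
    have : (M⁻¹.mulVec e) 1 = M⁻¹ 1 1 := by
      simp [he, mulVec, dotProduct, Fin.sum_univ_two]
    simp [hwdef, this, he, ← hcdef, inv_mul_cancel₀ hc0.ne']
  -- a ≠ 0
  have hMinvsym : M⁻¹ 0 1 = M⁻¹ 1 0 := by
    have h1 : M⁻¹ᵀ = M⁻¹ := by
      rw [Matrix.transpose_nonsing_inv, hMsym]
    have := congrFun (congrFun h1 1) 0
    simpa [Matrix.transpose_apply] using this
  have hnd : M⁻¹ 1 0 + M⁻¹ 1 1 ≠ 0 := by
    have : e ⬝ᵥ M⁻¹.mulVec (fun _ => (1:ℝ)) = M⁻¹ 1 0 + M⁻¹ 1 1 := by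
      simp [he, dotProduct, mulVec, Fin.sum_univ_two]
    rw [← this]
    exact hnondeg
  set a : ℝ := w 0 + w 1 with hadef
  have ha : a ≠ 0 := by
    have hw0 : w 0 = c⁻¹ * M⁻¹ 0 1 := by
      simp [hwdef, mulVec, dotProduct, Fin.sum_univ_two, he]
    have hw1' : w 1 = c⁻¹ * M⁻¹ 1 1 := by
      simp [hwdef, mulVec, dotProduct, Fin.sum_univ_two, he]
    rw [hadef, hw0, hw1', hMinvsym, ← mul_add]
    exact mul_ne_zero (inv_ne_zero hc0.ne') hnd
  -- the explicit form of ℓ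
  have hproj : ∀ ω, ℓ ω = if 0 ≤ (S⁻¹.mulVec (ξ ω)) 1 then S⁻¹.mulVec (ξ ω)
      else S⁻¹.mulVec (ξ ω) - (S⁻¹.mulVec (ξ ω)) 1 • w := by
    intro ω
    exact aux_proj M hM hMsym w c hc0 hw hw1 (S⁻¹.mulVec (ξ ω)) (ℓ ω) (hℓmem ω) (hℓmin ω)
  set F : ℝ × ℝ → ℝ := fun p =>
    ((S⁻¹ 0 0 + S⁻¹ 1 0) * p.1 + (S⁻¹ 0 1 + S⁻¹ 1 1) * p.2)
      - a * min (S⁻¹ 1 0 * p.1 + S⁻¹ 1 1 * p.2) 0 with hFdef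
  have hform : ∀ ω, ℓ ω 0 + ℓ ω 1 = F (ξ ω 0, ξ ω 1) := by
    intro ω
    have hz0 : (S⁻¹.mulVec (ξ ω)) 0 = S⁻¹ 0 0 * ξ ω 0 + S⁻¹ 0 1 * ξ ω 1 := by
      simp [mulVec, dotProduct, Fin.sum_univ_two]
    have hz1 : (S⁻¹.mulVec (ξ ω)) 1 = S⁻¹ 1 0 * ξ ω 0 + S⁻¹ 1 1 * ξ ω 1 := by
      simp [mulVec, dotProduct, Fin.sum_univ_two]
    rw [hproj ω]
    split_ifs with h
    · rw [hFdef]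
      simp only [hz0, hz1]
      rw [min_eq_right (by rw [← hz1]; exact h)]
      ring
    · rw [hFdef]
      simp only [Pi.sub_apply, Pi.smul_apply, smul_eq_mul]
      rw [min_eq_left (by rw [← hz1]; exact (not_le.mp h).le)]
      simp only [hz0, hz1, hadef]
      ring
  -- probability setup
  haveI hνprob : IsProbabilityMeasure ν := by rw [hν]; infer_instance
  have hJmeas : Measurable (fun ω => (ξ ω 0, ξ ω 1)) := (hξmeas 0).prodMk (hξmeas 1)
  have hJlaw : Measure.map (fun ω => (ξ ω 0, ξ ω 1)) P = ν.prod ν := by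
    have hind : IndepFun (fun ω => ξ ω 0) (fun ω => ξ ω 1) P :=
      hξindep.indepFun (show (0 : Fin 2) ≠ 1 by decide)
    rw [indepFun_iff_map_prod_eq_prod_map_map (hξmeas 0).aemeasurable
      (hξmeas 1).aemeasurable] at hind
    rw [hind, hξlaw 0, hξlaw 1]
  have hid : Integrable (fun x : ℝ => x) ν := by rw [hν]; exact aux_integrable_id_gaussian hv
  have hmapfst : Measure.map Prod.fst (ν.prod ν) = ν := by
    rw [Measure.map_fst_prod]; simp
  have hmapsnd : Measure.map Prod.snd (ν.prod ν) = ν := by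
    rw [Measure.map_snd_prod]; simp
  have hfst : Integrable (fun p : ℝ × ℝ => p.1) (ν.prod ν) :=
    (integrable_map_measure (f := (Prod.fst : ℝ × ℝ → ℝ)) (g := fun x : ℝ => x)
      (by rw [hmapfst]; exact hid.aestronglyMeasurable) measurable_fst.aemeasurable).mp
      (by rw [hmapfst]; exact hid)
  have hsnd : Integrable (fun p : ℝ × ℝ => p.2) (ν.prod ν) :=
    (integrable_map_measure (f := (Prod.snd : ℝ × ℝ → ℝ)) (g := fun x : ℝ => x)
      (by rw [hmapsnd]; exact hid.aestronglyMeasurable) measurable_snd.aemeasurable).mp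
      (by rw [hmapsnd]; exact hid)
  set m : ℝ × ℝ → ℝ := fun p => min (S⁻¹ 1 0 * p.1 + S⁻¹ 1 1 * p.2) 0 with hmdef
  set L : ℝ × ℝ → ℝ := fun p =>
    (S⁻¹ 0 0 + S⁻¹ 1 0) * p.1 + (S⁻¹ 0 1 + S⁻¹ 1 1) * p.2 with hLdef
  have hLint : Integrable L (ν.prod ν) := (hfst.const_mul _).add (hsnd.const_mul _)
  have hg_int : Integrable (fun p : ℝ × ℝ => S⁻¹ 1 0 * p.1 + S⁻¹ 1 1 * p.2) (ν.prod ν) :=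
    (hfst.const_mul _).add (hsnd.const_mul _)
  have hgmeas : Measurable (fun p : ℝ × ℝ => S⁻¹ 1 0 * p.1 + S⁻¹ 1 1 * p.2) := by fun_prop
  have hmint : Integrable m (ν.prod ν) := by
    refine hg_int.abs.mono' ((hgmeas.min measurable_const).aestronglyMeasurable)
      (Filter.Eventually.of_forall fun p => ?_)
    simp only [Real.norm_eq_abs, hmdef]
    rcases le_total (S⁻¹ 1 0 * p.1 + S⁻¹ 1 1 * p.2) 0 with h | h
    · rw [min_eq_left h]
    · rw [min_eq_right h]
      simp [abs_nonneg]
  have hFLm : F = fun p => L p - a * m p := rfl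
  have hFint : Integrable F (ν.prod ν) := by
    rw [hFLm]; exact hLint.sub (hmint.const_mul a)
  have hFsm : AEStronglyMeasurable F (ν.prod ν) := hFint.aestronglyMeasurable
  have hfF : (fun ω => ℓ ω 0 + ℓ ω 1) = fun ω => F (ξ ω 0, ξ ω 1) := funext fun ω => hform ω
  have hfint : Integrable (fun ω => ℓ ω 0 + ℓ ω 1) P := by
    rw [hfF]
    exact (integrable_map_measure (by rw [hJlaw]; exact hFsm) hJmeas.aemeasurable).mp
      (by rw [hJlaw]; exact hFint)
  have hEf : ∫ ω, (ℓ ω 0 + ℓ ω 1) ∂P = ∫ p, F p ∂(ν.prod ν) := by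
    rw [hfF]
    rw [← integral_map hJmeas.aemeasurable (by rw [hJlaw]; exact hFsm), hJlaw]
  -- ∫ L = 0 by symmetry
  have hnegmap : Measure.map (Prod.map (fun x : ℝ => -x) (fun x : ℝ => -x)) (ν.prod ν)
      = ν.prod ν := by
    rw [← Measure.map_prod_map _ _ measurable_neg measurable_neg, hν,
      aux_gaussian_map_neg]
  have hL0 : ∫ p, L p ∂(ν.prod ν) = 0 := by
    have h1 : ∫ p, L p ∂(ν.prod ν)
        = ∫ p, L (Prod.map (fun x : ℝ => -x) (fun x : ℝ => -x) p) ∂(ν.prod ν) := by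
      conv_lhs => rw [← hnegmap]
      rw [integral_map (by fun_prop) (by rw [hnegmap]; exact hLint.aestronglyMeasurable)]
    have h2 : (fun p : ℝ × ℝ => L (Prod.map (fun x : ℝ => -x) (fun x : ℝ => -x) p))
        = fun p => - L p := by
      funext p; simp [hLdef, Prod.map]; ring
    rw [h2, integral_neg] at h1
    linarith
  -- ∫ m < 0
  set I : ℝ := ∫ p, m p ∂(ν.prod ν) with hIdef
  have hIneg : I < 0 := by
    have hIle : I ≤ 0 := integral_nonpos fun p => min_le_right _ _
    rcases hIle.lt_or_eq with h | h
    · exact h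
    exfalso
    have hae : (fun p => - m p) =ᵐ[ν.prod ν] 0 := by
      rw [← integral_eq_zero_iff_of_nonneg (fun p => neg_nonneg.mpr (min_le_right _ _)) hmint.neg]
      rw [integral_neg, ← hIdef, h, neg_zero]
    set s : Set (ℝ × ℝ) := {p | S⁻¹ 1 0 * p.1 + S⁻¹ 1 1 * p.2 < 0} with hsdef
    have hsmeas : MeasurableSet s := measurableSet_lt hgmeas measurable_const
    have hnull : (ν.prod ν) s = 0 := by
      have h1 : (ν.prod ν) {p | ¬ (-(m p) = (0:ℝ))} = 0 := by
        have := hae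
        rw [Filter.EventuallyEq, ae_iff] at this
        simpa using this
      refine measure_mono_null ?_ h1
      intro p hp
      simp only [hsdef, Set.mem_setOf_eq] at hp ⊢
      have hmp : m p < 0 := by
        rw [hmdef]; simp only; rw [min_eq_left hp.le]; exact hp
      simp only [neg_eq_zero]
      exact hmp.ne
    have hδ : 0 < S⁻¹ 1 1 := by
      have := hA.dotProduct_mulVec_pos he0
      simp only [star_trivial] at this
      simpa [he, dotProduct, mulVec, Fin.sum_univ_two] using this
    have hspos : 0 < (ν.prod ν) s := by
      rw [Measure.prod_apply hsmeas]
      have hpre : ∀ x : ℝ, (Prod.mk x ⁻¹' s) = Set.Iio (-(S⁻¹ 1 0 * x) / S⁻¹ 1 1) := by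
        intro x; ext y
        simp only [hsdef, Set.mem_preimage, Set.mem_setOf_eq, Set.mem_Iio]
        rw [lt_div_iff₀ hδ]
        constructor <;> intro h'' <;> nlinarith
      rw [lintegral_congr fun x => by rw [hpre x]]
      have hmeasf : Measurable fun x : ℝ => ν (Set.Iio (-(S⁻¹ 1 0 * x) / S⁻¹ 1 1)) :=
        (Monotone.measurable fun r r' hrr' => measure_mono (Set.Iio_subset_Iio hrr')).comp
          (by fun_prop)
      rw [lintegral_pos_iff_support hmeasf]
      have hsupp : Function.support (fun x : ℝ => ν (Set.Iio (-(S⁻¹ 1 0 * x) / S⁻¹ 1 1)))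
          = Set.univ := by
        ext x
        have := aux_gaussian_Iio_pos hv (-(S⁻¹ 1 0 * x) / S⁻¹ 1 1)
        rw [← hν] at this
        simp [Function.support, this.ne']
      rw [hsupp]
      simp
    rw [hnull] at hspos
    exact lt_irrefl _ hspos
  -- layer cake and the contradiction
  by_contra hcon
  push_neg at hcon
  have hnegint : Integrable (fun ω => -(ℓ ω 0 + ℓ ω 1)) P := hfint.neg
  have hzero : ∫ ω, (ℓ ω 0 + ℓ ω 1) ∂P = 0 := by
    have hdecomp : ∫ ω, (ℓ ω 0 + ℓ ω 1) ∂P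
        = (∫ ω, (ℓ ω 0 + ℓ ω 1) ⊔ 0 ∂P) - ∫ ω, (-(ℓ ω 0 + ℓ ω 1)) ⊔ 0 ∂P := by
      rw [← integral_sub hfint.pos_part hnegint.pos_part]
      congr 1
      funext ω
      exact (max_zero_sub_max_neg_zero_eq_self (ℓ ω 0 + ℓ ω 1)).symm
    have h1 : ∫ ω, (ℓ ω 0 + ℓ ω 1) ⊔ 0 ∂P
        = ∫ t in Set.Ioi (0:ℝ), (P {ω | t < ℓ ω 0 + ℓ ω 1}).toReal := by
      rw [Integrable.integral_eq_integral_meas_lt hfint.pos_part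
        (Filter.Eventually.of_forall fun ω => le_max_right _ _)]
      refine setIntegral_congr_fun measurableSet_Ioi fun t ht => ?_
      have : {ω | t < (ℓ ω 0 + ℓ ω 1) ⊔ 0} = {ω | t < ℓ ω 0 + ℓ ω 1} := by
        ext ω
        simp only [Set.mem_setOf_eq, lt_sup_iff]
        exact or_iff_left (not_lt.mpr (le_of_lt ht))
      rw [this]
      rfl
    have h2 : ∫ ω, (-(ℓ ω 0 + ℓ ω 1)) ⊔ 0 ∂P
        = ∫ t in Set.Ioi (0:ℝ), (P {ω | ℓ ω 0 + ℓ ω 1 < -t}).toReal := by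
      rw [Integrable.integral_eq_integral_meas_lt hnegint.pos_part
        (Filter.Eventually.of_forall fun ω => le_max_right _ _)]
      refine setIntegral_congr_fun measurableSet_Ioi fun t ht => ?_
      have : {ω | t < (-(ℓ ω 0 + ℓ ω 1)) ⊔ 0} = {ω | ℓ ω 0 + ℓ ω 1 < -t} := by
        ext ω
        simp only [Set.mem_setOf_eq, lt_sup_iff]
        rw [lt_neg]
        exact or_iff_left (not_lt.mpr (le_of_lt ht))
      rw [this]
      rfl
    have h3 : ∫ t in Set.Ioi (0:ℝ), (P {ω | t < ℓ ω 0 + ℓ ω 1}).toReal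
        = ∫ t in Set.Ioi (0:ℝ), (P {ω | ℓ ω 0 + ℓ ω 1 < -t}).toReal :=
      setIntegral_congr_fun measurableSet_Ioi fun t ht => by rw [hcon t ht]
    rw [hdecomp, h1, h2, ← h3, sub_self]
  have hFval : ∫ p, F p ∂(ν.prod ν) = - (a * I) := by
    rw [hFLm, integral_sub hLint (hmint.const_mul a), hL0, integral_const_mul, ← hIdef,
      zero_sub]
  rw [hzero, hFval] at hEf
  have : a * I = 0 := by linarith
  exact mul_ne_zero ha hIneg.ne this
end
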